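/- arXiv:1611.06444 — 2 statements merged into one kernel-verified Lean document; each statement's English description precedes it below -/
import Mathlib

section
/- Let ε > 0, δ > 0, let a be a positive integer, R = ℤ/aℤ, V = Rⁿ, and let G be a finite abelian group with exponent dividing a. Let M be a random n×n matrix over R whose entries are independent ε-balanced random variables in R, and let F ∈ Hom(V, G) be a code of distance δn. Then there are constants K, c > 0 depending only on G, ε, δ and a such that for all n, |P(F∘M = 0) − |G|^{−n}| ≤ K e^{−cn} |G|^{−n}. -/
open MeasureTheory ProbabilityTheory Matrix

noncomputable section

/-- `V_{∖σ}`: the subgroup of `V = (ℤ/aℤ)ⁿ` generated by the standard basis vectors `v_i`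
for `i ∉ σ`, i.e. the vectors vanishing on `σ`. -/
def Vminus (a n : ℕ) (σ : Finset (Fin n)) : AddSubgroup (Fin n → ZMod a) where
  carrier := {v | ∀ i ∈ σ, v i = 0}
  zero_mem' := fun i _ => rfl
  add_mem' := by
    intro x y hx hy i hi
    simp only [Pi.add_apply, hx i hi, hy i hi, add_zero]
  neg_mem' := by
    intro x hx i hi
    simp only [Pi.neg_apply, hx i hi, neg_zero]

/-- `ℓ(D) = ∑ e_i` where `D = ∏ p_i^{e_i}`: the number of prime factors of `D` counted
with multiplicity. -/
def ell (D : ℕ) : ℕ := D.primeFactorsList.length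

/-- The set of positive integers `D` for which there is a `σ ⊆ [n]` with
`|σ| < ℓ(D)δn` and `D = [G : F(V_{∖σ})]`. -/
def depthSet {a n : ℕ} {G : Type*} [AddCommGroup G] (δ : ℝ)
    (F : (Fin n → ZMod a) →+ G) : Set ℕ :=
  {D | 0 < D ∧ ∃ σ : Finset (Fin n), (σ.card : ℝ) < (ell D : ℝ) * δ * n ∧
    D = ((Vminus a n σ).map F).index}

/-- `F` has depth `D` if `D` is the maximal element of `depthSet δ F`, or if `D = 1` and
`depthSet δ F` is empty. -/
def HasDepth {a n : ℕ} {G : Type*} [AddCommGroup G] (δ : ℝ)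
    (F : (Fin n → ZMod a) →+ G) (D : ℕ) : Prop :=
  (D ∈ depthSet δ F ∧ ∀ D' ∈ depthSet δ F, D' ≤ D) ∨ (D = 1 ∧ depthSet δ F = ∅)

/-- `F` is a code of distance `w`: removing fewer than `w` of the standard basis vectors
leaves a generating set of the image `G`, i.e. `F(V_{∖σ}) = G` for all `|σ| < w`. -/
def IsCode {a n : ℕ} {G : Type*} [AddCommGroup G] (w : ℝ)
    (F : (Fin n → ZMod a) →+ G) : Prop :=
  ∀ σ : Finset (Fin n), (σ.card : ℝ) < w → (Vminus a n σ).map F = ⊤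

/-- A random variable valued in `ℤ/aℤ` is `ε`-balanced if for every prime `p ∣ a` and every
residue `r` mod `p`, `P(y ≡ r (mod p)) ≤ 1 - ε`. -/
def IsEpsBalancedZMod {Ω : Type*} [MeasurableSpace Ω] (μ : Measure Ω) (ε : ℝ) {a : ℕ}
    (y : Ω → ZMod a) : Prop :=
  ∀ (p : ℕ) (_ : p.Prime) (hpa : p ∣ a) (r : ZMod p),
    μ {ω | ZMod.castHom hpa (ZMod p) (y ω) = r} ≤ ENNReal.ofReal (1 - ε)

/-- A random `n × n` matrix over `ℤ/aℤ` is `ε`-balanced if its entries are independent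
`ε`-balanced random variables. -/
def IsEpsBalancedMatrix {Ω : Type*} [MeasurableSpace Ω] (μ : Measure Ω) (ε : ℝ) {a n : ℕ}
    (M : Ω → Matrix (Fin n) (Fin n) (ZMod a)) : Prop :=
  IsProbabilityMeasure μ ∧
    (∀ i j, Measurable fun ω => M ω i j) ∧
    (∀ i j, IsEpsBalancedZMod μ ε fun ω => M ω i j) ∧
    iIndepFun
      (fun q : Fin n × Fin n => fun ω => M ω q.1 q.2) μ


/-! The event `F ∘ M = 0` says that `F` kills every column of `M`. The columns are independent,
so its probability is the product over the columns of `P(F x = 0)`, where `x` has independent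
`ε`-balanced coordinates. Fourier analysis on `G` gives
`|G| P(F x = 0) - 1 = ∑_{ψ ≠ 1} ∏_i E ψ(F(x_i v_i))`. A balanced coordinate shrinks every
nontrivial character of `ℤ/aℤ` by a fixed factor `e^{-κ} < 1` (its kernel lies in `pℤ/aℤ` for some
prime `p ∣ a`, and the mass of each residue class mod `p` is at most `1 - ε`), and because `F` is a
code of distance `δn`, every `ψ ≠ 1` stays nontrivial on at least `δn` of the coordinates. Hence
each column probability is `|G|⁻¹ (1 + O(e^{-κδn}))`, and the product of `n` of them is
`|G|^{-n} (1 + O(n e^{-κδn}))`. -/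

open Finset

theorem AddChar.map_sum_eq_prod {ι A M : Type*} [AddCommMonoid A] [CommMonoid M]
    (ψ : AddChar A M) (s : Finset ι) (f : ι → A) : ψ (∑ i ∈ s, f i) = ∏ i ∈ s, ψ (f i) :=
  map_prod ψ.toMonoidHom (fun i => Multiplicative.ofAdd (f i)) s

def rootGap (a : ℕ) : ℝ :=
  if h : ((Polynomial.nthRootsFinset a (1 : ℂ)).erase 1).Nonempty then
    ((Polynomial.nthRootsFinset a (1 : ℂ)).erase 1).inf' h (fun z => 1 - z.re)
  else 1

theorem Complex.re_lt_one_of_pow_eq_one {a : ℕ} (ha : a ≠ 0) {z : ℂ} (hz : z ^ a = 1)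
    (h1 : z ≠ 1) : z.re < 1 := by
  have hsq : z.re ^ 2 + z.im ^ 2 = 1 := by
    have := Complex.sq_norm z
    rw [Complex.normSq_apply, Complex.norm_eq_one_of_pow_eq_one hz ha] at this
    nlinarith
  by_contra! hre
  have him : z.im = 0 := by nlinarith
  exact h1 (Complex.ext (by simp only [Complex.one_re]; nlinarith) him)

theorem rootGap_pos {a : ℕ} (ha : a ≠ 0) : 0 < rootGap a := by
  unfold rootGap
  split_ifs with h
  · rw [Finset.lt_inf'_iff]
    intro z hz
    rw [Finset.mem_erase, Polynomial.mem_nthRootsFinset (Nat.pos_of_ne_zero ha)] at hz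
    linarith [Complex.re_lt_one_of_pow_eq_one ha hz.2 hz.1]
  · exact one_pos

theorem re_le_one_sub_rootGap {a : ℕ} (ha : a ≠ 0) {z : ℂ} (hz : z ^ a = 1) (h1 : z ≠ 1) :
    z.re ≤ 1 - rootGap a := by
  have hmem : z ∈ (Polynomial.nthRootsFinset a (1 : ℂ)).erase 1 :=
    Finset.mem_erase.2 ⟨h1, (Polynomial.mem_nthRootsFinset (Nat.pos_of_ne_zero ha) 1).2 hz⟩
  have : rootGap a ≤ 1 - z.re := by
    rw [rootGap, dif_pos ⟨z, hmem⟩]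
    exact Finset.inf'_le _ hmem
  linarith

namespace AddChar

variable {a : ℕ} (χ : AddChar (ZMod a) ℂ)

theorem apply_eq_pow_val [NeZero a] (t : ZMod a) : χ t = χ 1 ^ t.val := by
  rw [← map_nsmul_eq_pow, nsmul_eq_mul, mul_one, ZMod.natCast_zmod_val]

theorem apply_pow_eq_one (t : ZMod a) : χ t ^ a = 1 := by
  rw [← map_nsmul_eq_pow, nsmul_eq_mul, ZMod.natCast_self, zero_mul, map_zero_eq_one]

theorem re_le_one_sub_rootGap [NeZero a] {t : ZMod a} (ht : χ t ≠ 1) : (χ t).re ≤ 1 - rootGap a :=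
  _root_.re_le_one_sub_rootGap (NeZero.ne a) (χ.apply_pow_eq_one t) ht

theorem exists_prime_ker_le [NeZero a] (hχ : χ ≠ 1) :
    ∃ p, p.Prime ∧ ∃ hpa : p ∣ a, ∀ u, χ u = 1 → ZMod.castHom hpa (ZMod p) u = 0 := by
  have hm1 : orderOf (χ 1) ≠ 1 := by
    refine fun h => hχ ?_
    ext t
    rw [apply_eq_pow_val, orderOf_eq_one_iff.1 h, one_pow, one_apply]
  set p := (orderOf (χ 1)).minFac
  have hpm : p ∣ orderOf (χ 1) := Nat.minFac_dvd _
  have hpa : p ∣ a := hpm.trans (orderOf_dvd_of_pow_eq_one (χ.apply_pow_eq_one 1))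
  refine ⟨p, Nat.minFac_prime hm1, hpa, fun u hu => ?_⟩
  rw [apply_eq_pow_val] at hu
  rw [ZMod.castHom_apply, ← ZMod.natCast_val, ZMod.natCast_eq_zero_iff]
  exact hpm.trans (orderOf_dvd_of_pow_eq_one hu)

end AddChar

section FourierCoefficient

variable {A : Type*} [AddCommGroup A] [Fintype A]

theorem norm_sq_sum_mul_addChar (q : A → ℝ) (χ : AddChar A ℂ) :
    ‖∑ t, (q t : ℂ) * χ t‖ ^ 2 = ∑ s, ∑ t, q s * q t * (χ (s - t)).re := by
  set S := ∑ t, (q t : ℂ) * χ t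
  have hconj : starRingEnd ℂ S = ∑ t, (q t : ℂ) * χ (-t) := by
    simp only [S, map_sum, map_mul, Complex.conj_ofReal, AddChar.map_neg_eq_inv,
      Complex.inv_eq_conj (AddChar.norm_apply _ _)]
  have hexpand : S * starRingEnd ℂ S = ∑ s, ∑ t, ((q s * q t : ℝ) : ℂ) * χ (s - t) := by
    rw [hconj, Finset.sum_mul_sum]
    refine Finset.sum_congr rfl fun s _ => Finset.sum_congr rfl fun t _ => ?_
    rw [sub_eq_add_neg, AddChar.map_add_eq_mul]
    push_cast
    ring
  rw [← Complex.ofReal_re (‖S‖ ^ 2), Complex.ofReal_pow, ← Complex.mul_conj', hexpand]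
  simp only [Complex.re_sum, Complex.re_ofReal_mul]

theorem norm_sq_sum_mul_addChar_le {B : Type*} [AddCommGroup B] [DecidableEq B]
    {q : A → ℝ} (hq0 : ∀ t, 0 ≤ q t) (hq1 : ∑ t, q t = 1) {χ : AddChar A ℂ} {π : A →+ B}
    (hker : ∀ u, χ u = 1 → π u = 0) {c ε : ℝ} (hc : 0 ≤ c)
    (hre : ∀ u, χ u ≠ 1 → (χ u).re ≤ 1 - c) (hbal : ∀ r, ∑ t with π t = r, q t ≤ 1 - ε) :
    ‖∑ t, (q t : ℂ) * χ t‖ ^ 2 ≤ 1 - c * ε := by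
  have hpoint : ∀ s t, (χ (s - t)).re ≤ 1 - c * if π t = π s then 0 else 1 := by
    intro s t
    split_ifs with hst
    · simpa [AddChar.norm_apply] using Complex.re_le_norm (χ (s - t))
    · rw [mul_one]
      refine hre _ fun h => hst ?_
      rw [← sub_eq_zero, ← map_sub, ← neg_sub, map_neg, hker _ h, neg_zero]
  have hrow : ∀ s, ∑ t, q t * (χ (s - t)).re ≤ 1 - c * ε := by
    intro s
    have hfar : ε ≤ ∑ t, q t * if π t = π s then 0 else 1 := by
      have := Finset.sum_filter_add_sum_filter_not univ (fun t => π t = π s) q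
      simp only [mul_ite, mul_zero, mul_one, Finset.sum_ite, Finset.sum_const_zero, zero_add]
      linarith [hbal (π s)]
    calc ∑ t, q t * (χ (s - t)).re
        ≤ ∑ t, q t * (1 - c * if π t = π s then 0 else 1) :=
          Finset.sum_le_sum fun t _ => mul_le_mul_of_nonneg_left (hpoint s t) (hq0 t)
      _ = 1 - c * ∑ t, q t * if π t = π s then 0 else 1 := by
          simp only [mul_sub, mul_one, Finset.sum_sub_distrib, hq1, Finset.mul_sum]
          congr 1
          exact Finset.sum_congr rfl fun t _ => by ring
      _ ≤ 1 - c * ε := by nlinarith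
  calc ‖∑ t, (q t : ℂ) * χ t‖ ^ 2 = ∑ s, q s * ∑ t, q t * (χ (s - t)).re := by
        simp only [norm_sq_sum_mul_addChar, Finset.mul_sum, mul_assoc]
    _ ≤ ∑ s, q s * (1 - c * ε) :=
        Finset.sum_le_sum fun s _ => mul_le_mul_of_nonneg_left (hrow s) (hq0 s)
    _ = 1 - c * ε := by rw [← Finset.sum_mul, hq1, one_mul]

end FourierCoefficient

theorem norm_sum_mul_addChar_le_exp {a : ℕ} [NeZero a] {ε : ℝ} {q : ZMod a → ℝ}
    (hq0 : ∀ t, 0 ≤ q t) (hq1 : ∑ t, q t = 1)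
    (hbal : ∀ p, p.Prime → ∀ (hpa : p ∣ a) (r : ZMod p),
      ∑ t with ZMod.castHom hpa (ZMod p) t = r, q t ≤ 1 - ε)
    {χ : AddChar (ZMod a) ℂ} (hχ : χ ≠ 1) :
    ‖∑ t, (q t : ℂ) * χ t‖ ≤ Real.exp (-(rootGap a * ε / 2)) := by
  obtain ⟨p, hp, hpa, hker⟩ := χ.exists_prime_ker_le hχ
  have hsq := norm_sq_sum_mul_addChar_le (π := (ZMod.castHom hpa (ZMod p)).toAddMonoidHom)
    hq0 hq1 hker (rootGap_pos (NeZero.ne a)).le (fun u => χ.re_le_one_sub_rootGap)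
    (hbal p hp hpa)
  refine le_of_pow_le_pow_left₀ two_ne_zero (Real.exp_pos _).le (hsq.trans ?_)
  calc 1 - rootGap a * ε ≤ Real.exp (-(rootGap a * ε)) := by
        linarith [Real.add_one_le_exp (-(rootGap a * ε))]
    _ = Real.exp (-(rootGap a * ε / 2)) ^ 2 := by
        rw [← Real.exp_nat_mul]
        congr 1
        push_cast
        ring

theorem norm_prod_le_exp_neg_mul_card {ι : Type*} [Fintype ι] [DecidableEq ι] (x : ι → ℂ)
    (s : Finset ι) {κ : ℝ} (h1 : ∀ i, ‖x i‖ ≤ 1) (hs : ∀ i ∈ s, ‖x i‖ ≤ Real.exp (-κ)) :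
    ‖∏ i, x i‖ ≤ Real.exp (-κ * #s) := by
  rw [norm_prod, ← Finset.prod_mul_prod_compl s, mul_comm (-κ), Real.exp_nat_mul]
  refine (mul_le_mul ((Finset.prod_le_prod (fun i _ => norm_nonneg _) hs).trans_eq
    (Finset.prod_const _))
    (Finset.prod_le_one (fun i _ => norm_nonneg _) fun i _ => h1 i)
    (Finset.prod_nonneg fun i _ => norm_nonneg _) (by positivity)).trans_eq (mul_one _)

section Columns

variable {ι A G : Type*} [Fintype ι] [AddCommGroup A] [Fintype A] [AddCommGroup G]

open scoped Classical in
/-- `P(F x = 0)` for a random `x` whose coordinates `x i` are independent with laws `q i`. -/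
def probKer [DecidableEq ι] (q : ι → A → ℝ) (F : (ι → A) →+ G) : ℝ :=
  ∑ x with F x = 0, ∏ i, q i (x i)

theorem card_mul_probKer_eq_sum_prod [DecidableEq ι] [Finite G] (q : ι → A → ℝ)
    (F : (ι → A) →+ G) :
    (Nat.card G : ℂ) * probKer q F =
      ∑ ψ : AddChar G ℂ, ∏ i, ∑ t, (q i t : ℂ) * ψ (F (Pi.single i t)) := by
  classical
  have := Fintype.ofFinite G
  have hcoord : ∀ (ψ : AddChar G ℂ) x, ψ (F x) = ∏ i, ψ (F (Pi.single i (x i))) := by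
    intro ψ x
    conv_lhs => rw [← Finset.univ_sum_single x, map_sum, AddChar.map_sum_eq_prod]
  calc (Nat.card G : ℂ) * probKer q F
      = ∑ x : ι → A, (∏ i, (q i (x i) : ℂ)) * ∑ ψ : AddChar G ℂ, ψ (F x) := by
        rw [probKer, Finset.sum_filter, Nat.card_eq_fintype_card]
        push_cast
        rw [Finset.mul_sum]
        refine Finset.sum_congr rfl fun x _ => ?_
        rw [AddChar.sum_apply_eq_ite]
        split_ifs <;> simp [mul_comm]
    _ = ∑ ψ : AddChar G ℂ, ∑ x : ι → A, ∏ i, (q i (x i) : ℂ) * ψ (F (Pi.single i (x i))) := by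
        simp only [Finset.mul_sum]
        rw [Finset.sum_comm]
        refine Finset.sum_congr rfl fun ψ _ => Finset.sum_congr rfl fun x _ => ?_
        rw [hcoord ψ x, Finset.prod_mul_distrib]
    _ = _ := by simp only [Finset.prod_univ_sum, Fintype.piFinset_univ]

theorem abs_card_mul_probKer_sub_one_le [DecidableEq ι] [Finite G] {q : ι → A → ℝ}
    (hq0 : ∀ i t, 0 ≤ q i t) (hq1 : ∀ i, ∑ t, q i t = 1) {κ : ℝ} (hκ : 0 ≤ κ)
    (hq : ∀ i (χ : AddChar A ℂ), χ ≠ 1 → ‖∑ t, (q i t : ℂ) * χ t‖ ≤ Real.exp (-κ))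
    {F : (ι → A) →+ G} {w : ℝ}
    (hF : ∀ ψ : AddChar G ℂ, ψ ≠ 1 →
      w ≤ #{i | ψ.compAddMonoidHom (F.comp (AddMonoidHom.single _ i)) ≠ 1}) :
    |Nat.card G * probKer q F - 1| ≤ Nat.card G * Real.exp (-κ * w) := by
  have := Fintype.ofFinite G
  let S : AddChar G ℂ → ι → ℂ := fun ψ i => ∑ t, (q i t : ℂ) * ψ (F (Pi.single i t))
  have hS1 : ∀ ψ i, ‖S ψ i‖ ≤ 1 := fun ψ i => by
    refine (norm_sum_le _ _).trans_eq ?_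
    simp only [norm_mul, AddChar.norm_apply, mul_one, Complex.norm_real, Real.norm_eq_abs,
      abs_of_nonneg (hq0 i _), hq1]
  have htriv : ∏ i, S 1 i = 1 := Finset.prod_eq_one fun i _ => by
    simp only [S, AddChar.one_apply, mul_one, ← Complex.ofReal_sum, hq1, Complex.ofReal_one]
  have hnontriv : ∀ ψ ≠ 1, ‖∏ i, S ψ i‖ ≤ Real.exp (-κ * w) := fun ψ hψ =>
    (norm_prod_le_exp_neg_mul_card (S ψ) _ (hS1 ψ) fun i hi => by
      simpa only [AddChar.compAddMonoidHom_apply, AddMonoidHom.comp_apply,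
        AddMonoidHom.single_apply] using hq i _ (Finset.mem_filter.1 hi).2).trans
      (Real.exp_le_exp.2 (mul_le_mul_of_nonpos_left (hF ψ hψ) (neg_nonpos.2 hκ)))
  have hsum : (Nat.card G : ℂ) * probKer q F - 1 = ∑ ψ ∈ univ.erase 1, ∏ i, S ψ i := by
    rw [card_mul_probKer_eq_sum_prod, ← Finset.add_sum_erase _ _ (Finset.mem_univ 1), htriv,
      add_sub_cancel_left]
  calc |Nat.card G * probKer q F - 1|
      = ‖∑ ψ ∈ univ.erase 1, ∏ i, S ψ i‖ := by
        rw [← hsum, ← Real.norm_eq_abs, ← Complex.norm_real]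
        push_cast
        rfl
    _ ≤ #(univ.erase (1 : AddChar G ℂ)) * Real.exp (-κ * w) :=
        (norm_sum_le_of_le _ fun ψ hψ => hnontriv ψ (Finset.ne_of_mem_erase hψ)).trans_eq
          (by rw [Finset.sum_const, nsmul_eq_mul])
    _ ≤ Nat.card G * Real.exp (-κ * w) := by
        gcongr
        rw [Nat.card_eq_fintype_card, ← AddChar.card_eq, ← Finset.card_univ]
        exact Finset.card_erase_le

end Columns

theorem IsCode.le_card_filter_ne_one {a n : ℕ} {G M : Type*} [AddCommGroup G] [CommMonoid M]
    {w : ℝ} {F : (Fin n → ZMod a) →+ G} (hF : IsCode w F) {ψ : AddChar G M} (hψ : ψ ≠ 1) :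
    w ≤ #{i | ψ.compAddMonoidHom (F.comp (AddMonoidHom.single _ i)) ≠ 1} := by
  by_contra! hlt
  obtain ⟨g, hg⟩ := AddChar.ne_one_iff.1 hψ
  obtain ⟨v, hv, rfl⟩ : g ∈ (Vminus a n _).map F := by rw [hF _ hlt]; trivial
  refine hg ?_
  rw [← Finset.univ_sum_single v, map_sum, AddChar.map_sum_eq_prod]
  refine Finset.prod_eq_one fun i _ => ?_
  by_cases hi : ψ.compAddMonoidHom (F.comp (AddMonoidHom.single _ i)) = 1
  · simpa using DFunLike.congr_fun hi (v i)
  · rw [hv i (Finset.mem_filter.2 ⟨Finset.mem_univ i, hi⟩), Pi.single_zero, map_zero,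
      AddChar.map_zero_eq_one]

theorem ProbabilityTheory.iIndepFun.measureReal_mem_eq_sum_prod {Ω ι β : Type*}
    [MeasurableSpace Ω] {μ : Measure Ω} [Fintype ι] [MeasurableSpace β]
    [MeasurableSingletonClass β] {X : ι → Ω → β} (hX : ∀ i, Measurable (X i))
    (hind : iIndepFun X μ) (S : Finset (ι → β)) :
    μ.real {ω | (fun i => X i ω) ∈ S} = ∑ x ∈ S, ∏ i, μ.real (X i ⁻¹' {x i}) := by
  have := hind.isProbabilityMeasure
  have hfiber : ∀ x : ι → β, (fun ω i => X i ω) ⁻¹' {x} = ⋂ i, X i ⁻¹' {x i} := by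
    intro x
    ext ω
    simp [funext_iff]
  rw [show {ω | (fun i => X i ω) ∈ S} = (fun ω i => X i ω) ⁻¹' ↑S from rfl,
    ← sum_measureReal_preimage_singleton S fun x _ => by
      rw [hfiber]
      exact MeasurableSet.iInter fun i => hX i (measurableSet_singleton _)]
  refine Finset.sum_congr rfl fun x _ => ?_
  rw [hfiber, measureReal_def, hind.meas_iInter fun i => ⟨{x i}, measurableSet_singleton _, rfl⟩,
    ENNReal.toReal_prod]
  rfl

theorem IsEpsBalancedZMod.sum_measureReal_le {Ω : Type*} [MeasurableSpace Ω] {μ : Measure Ω}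
    [IsFiniteMeasure μ] {ε : ℝ} {a : ℕ} [NeZero a] {Y : Ω → ZMod a} (hY : Measurable Y)
    (h : IsEpsBalancedZMod μ ε Y) (p : ℕ) (hp : p.Prime) (hpa : p ∣ a) (r : ZMod p) :
    ∑ t with ZMod.castHom hpa (ZMod p) t = r, μ.real (Y ⁻¹' {t}) ≤ 1 - min ε 1 := by
  rw [sum_measureReal_preimage_singleton _ fun t _ => hY (measurableSet_singleton t)]
  have hset : Y ⁻¹' ↑(univ.filter fun t => ZMod.castHom hpa (ZMod p) t = r) =
      {ω | ZMod.castHom hpa (ZMod p) (Y ω) = r} := by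
    ext ω
    simp only [Set.mem_preimage, coe_filter, mem_univ, true_and, Set.mem_ofPred_eq]
  calc μ.real (Y ⁻¹' ↑(univ.filter fun t => ZMod.castHom hpa (ZMod p) t = r))
      ≤ (ENNReal.ofReal (1 - ε)).toReal := by
        rw [hset, measureReal_def]
        exact ENNReal.toReal_mono ENNReal.ofReal_ne_top (h p hp hpa r)
    _ = 1 - min ε 1 := by
        rw [ENNReal.toReal_ofReal']
        rcases le_total ε 1 with hε | hε <;> simp [hε]

theorem forall_map_mulVec_eq_zero_iff {a : ℕ} {m n G : Type*} [Fintype n] [DecidableEq n]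
    [AddCommGroup G] (F : (m → ZMod a) →+ G) (A : Matrix m n (ZMod a)) :
    (∀ v, F (A *ᵥ v) = 0) ↔ ∀ j, F (Aᵀ j) = 0 := by
  refine ⟨fun h j => ?_, fun h v => ?_⟩
  · have := h (Pi.single j 1)
    rwa [Matrix.mulVec_single_one] at this
  · rw [← AddMonoidHom.mem_ker, Matrix.mulVec_eq_sum]
    exact sum_mem fun j _ => by simpa using zmod_smul_mem (AddMonoidHom.mem_ker.2 (h j)) (v j)

theorem sum_prod_filter_forall_eq_prod_sum {ι κ A : Type*} [Fintype ι] [Fintype κ]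
    [DecidableEq ι] [DecidableEq κ] [Fintype A] (P : κ → (ι → A) → Prop)
    [∀ j, DecidablePred (P j)] (w : ι → κ → A → ℝ) :
    ∑ x : ι × κ → A with ∀ j, P j (fun i => x (i, j)), ∏ p, w p.1 p.2 (x p) =
      ∏ j, ∑ y with P j y, ∏ i, w i j (y i) := by
  rw [Finset.prod_univ_sum]
  refine Finset.sum_equiv ((Equiv.curry ι κ A).trans (Equiv.piComm _)) (fun x => ?_)
    fun x _ => ?_
  · simp only [mem_filter, mem_univ, true_and, Equiv.trans_apply, Equiv.curry_apply,
      Fintype.mem_piFinset]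
    rfl
  · rw [Fintype.prod_prod_type, Finset.prod_comm]
    rfl

theorem measureReal_forall_map_mulVec_eq_zero {Ω : Type*} [MeasurableSpace Ω] {μ : Measure Ω}
    {a : ℕ} [NeZero a] {m n G : Type*} [Fintype m] [Fintype n] [DecidableEq m] [DecidableEq n]
    [AddCommGroup G] {M : Ω → Matrix m n (ZMod a)} (hmeas : ∀ i j, Measurable fun ω => M ω i j)
    (hind : iIndepFun (fun p : m × n => fun ω => M ω p.1 p.2) μ) (F : (m → ZMod a) →+ G) :
    μ.real {ω | ∀ v, F (M ω *ᵥ v) = 0} =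
      ∏ j, probKer (fun i t => μ.real ((fun ω => M ω i j) ⁻¹' {t})) F := by
  classical
  have hevent : {ω | ∀ v, F (M ω *ᵥ v) = 0} = {ω | (fun p : m × n => M ω p.1 p.2) ∈
      univ.filter fun x : m × n → ZMod a => ∀ j, F (fun i => x (i, j)) = 0} := by
    ext ω
    simp only [Set.mem_ofPred_eq, forall_map_mulVec_eq_zero_iff, mem_filter, mem_univ, true_and]
    rfl
  rw [hevent]
  refine (hind.measureReal_mem_eq_sum_prod (fun p : m × n => hmeas p.1 p.2) _).trans ?_
  convert sum_prod_filter_forall_eq_prod_sum (fun _ y => F y = 0)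
    (fun i j t => μ.real ((fun ω => M ω i j) ⁻¹' {t})) using 1
  rfl

theorem abs_prod_sub_inv_pow_le {ι : Type*} [Fintype ι] (P : ι → ℝ) {N d : ℝ} (hN : 0 < N)
    (hP : ∀ j, |N * P j - 1| ≤ d) :
    |∏ j, P j - (N ^ Fintype.card ι)⁻¹| ≤
      (Real.exp (Fintype.card ι * d) - 1) * (N ^ Fintype.card ι)⁻¹ := by
  have hprod : ∏ j, P j = (N ^ Fintype.card ι)⁻¹ * ∏ j, (1 + (N * P j - 1)) := by
    simp only [add_sub_cancel, Finset.prod_mul_distrib, Finset.prod_const, Finset.card_univ]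
    field_simp
  rw [hprod, ← mul_sub_one, abs_mul, abs_of_pos (by positivity), mul_comm]
  gcongr
  rw [← Real.norm_eq_abs]
  refine (Finset.norm_prod_one_add_sub_one_le univ _).trans ?_
  gcongr
  simpa using Finset.sum_le_card_nsmul univ (fun j => ‖N * P j - 1‖) d fun j _ => hP j

theorem exp_mul_exp_neg_sub_one_le {N β : ℝ} (hN : 0 ≤ N) (hβ : 0 < β) (n : ℕ) :
    Real.exp (n * (N * Real.exp (-β * n))) - 1 ≤
      2 * N / β * Real.exp (2 * N / β) * Real.exp (-(β / 2) * n) := by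
  set y := Real.exp (-(β / 2) * n)
  have hy1 : y ≤ 1 := Real.exp_le_one_iff.2 (by nlinarith [n.cast_nonneg (α := ℝ)])
  have hny : n * y ≤ 2 / β := by
    rw [le_div_iff₀ hβ]
    have h := Real.add_one_le_exp (β / 2 * n)
    have hyinv : Real.exp (β / 2 * n) * y = 1 := by rw [← Real.exp_add]; simp
    nlinarith [Real.exp_pos (-(β / 2) * n)]
  have hX : n * (N * Real.exp (-β * n)) ≤ 2 * N / β * y := by
    have hyy : Real.exp (-β * n) = y * y := by rw [← Real.exp_add]; ring_nf
    rw [hyy]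
    have := mul_le_mul_of_nonneg_left hny (by positivity : 0 ≤ N * y)
    calc n * (N * (y * y)) = N * y * (n * y) := by ring
      _ ≤ N * y * (2 / β) := this
      _ = 2 * N / β * y := by ring
  have hY : 2 * N / β * y ≤ 2 * N / β := mul_le_of_le_one_right (by positivity) hy1
  have hexp : Real.exp (2 * N / β * y) - 1 ≤ 2 * N / β * y * Real.exp (2 * N / β * y) := by
    have h := Real.add_one_le_exp (-(2 * N / β * y))
    have h' : Real.exp (-(2 * N / β * y)) * Real.exp (2 * N / β * y) = 1 := by
      rw [← Real.exp_add]; simp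
    nlinarith [Real.exp_pos (2 * N / β * y)]
  calc Real.exp (n * (N * Real.exp (-β * n))) - 1 ≤ Real.exp (2 * N / β * y) - 1 := by
        gcongr
    _ ≤ 2 * N / β * y * Real.exp (2 * N / β) := hexp.trans (by gcongr)
    _ = 2 * N / β * Real.exp (2 * N / β) * y := by ring

theorem prob_FM_eq_zero_of_code_general (ε δ : ℝ) (hε : 0 < ε) (hδ : 0 < δ)
    (a : ℕ) (ha : 0 < a)
    (G : Type*) [AddCommGroup G] [Finite G] :
    ∃ K c : ℝ, 0 < K ∧ 0 < c ∧
      ∀ (n : ℕ) (Ω : Type) [MeasurableSpace Ω] (μ : Measure Ω)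
        (M : Ω → Matrix (Fin n) (Fin n) (ZMod a)), IsEpsBalancedMatrix μ ε M →
        ∀ F : (Fin n → ZMod a) →+ G, IsCode (δ * n) F →
          |(μ {ω | ∀ v, F ((M ω).mulVec v) = 0}).toReal - ((Nat.card G : ℝ) ^ n)⁻¹| ≤
            K * Real.exp (-c * n) * ((Nat.card G : ℝ) ^ n)⁻¹ := by
  have : NeZero a := ⟨ha.ne'⟩
  set N : ℝ := (Nat.card G : ℝ)
  have hN : 0 < N := Nat.cast_pos.2 Nat.card_pos
  set κ := rootGap a * min ε 1 / 2
  have hκ : 0 < κ := by have := rootGap_pos (NeZero.ne a); positivity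
  refine ⟨2 * N / (κ * δ) * Real.exp (2 * N / (κ * δ)), κ * δ / 2, by positivity, by positivity,
    fun n Ω _ μ M ⟨hprob, hmeas, hbal, hind⟩ F hF => ?_⟩
  set q := fun i j t => μ.real ((fun ω => M ω i j) ⁻¹' {t})
  have hq0 : ∀ i j t, 0 ≤ q i j t := fun i j t => measureReal_nonneg
  have hq1 : ∀ i j, ∑ t, q i j t = 1 := fun i j => by
    rw [sum_measureReal_preimage_singleton _ fun t _ => hmeas i j (measurableSet_singleton t),
      coe_univ, Set.preimage_univ, probReal_univ]
  have hcol : ∀ j, |N * probKer (fun i => q i j) F - 1| ≤ N * Real.exp (-(κ * δ) * n) :=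
    fun j => (abs_card_mul_probKer_sub_one_le (fun i => hq0 i j) (fun i => hq1 i j) hκ.le
      (fun i χ hχ => norm_sum_mul_addChar_le_exp (hq0 i j) (hq1 i j)
        ((hbal i j).sum_measureReal_le (hmeas i j)) hχ)
      fun ψ hψ => hF.le_card_filter_ne_one hψ).trans_eq (by simp only [N]; ring_nf)
  rw [← measureReal_def, measureReal_forall_map_mulVec_eq_zero hmeas hind F]
  calc _ ≤ (Real.exp (n * (N * Real.exp (-(κ * δ) * n))) - 1) * (N ^ n)⁻¹ := by
        simpa using abs_prod_sub_inv_pow_le _ hN hcol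
    _ ≤ _ := by
        gcongr
        exact exp_mul_exp_neg_sub_one_le hN.le (by positivity) n

/-- For an `ε`-balanced random matrix `M` over `R = ℤ/aℤ` and a code `F ∈ Hom(V, G)` of
distance `δn`, the probability that `F ∘ M = 0` is within `K e^{-cn} |G|^{-n}` of
`|G|^{-n}`, where `K, c > 0` depend only on `G`, `ε`, `δ` and `a`. -/
theorem prob_FM_eq_zero_of_code (ε δ : ℝ) (hε : 0 < ε) (hδ : 0 < δ)
    (a : ℕ) (ha : 0 < a)
    (G : Type*) [AddCommGroup G] [Finite G] (hGa : ∀ g : G, a • g = 0) :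
    ∃ K c : ℝ, 0 < K ∧ 0 < c ∧
      ∀ (n : ℕ) (Ω : Type) [MeasurableSpace Ω] (μ : Measure Ω)
        (M : Ω → Matrix (Fin n) (Fin n) (ZMod a)), IsEpsBalancedMatrix μ ε M →
        ∀ F : (Fin n → ZMod a) →+ G, IsCode (δ * n) F →
          |(μ {ω | ∀ v, F ((M ω).mulVec v) = 0}).toReal - ((Nat.card G : ℝ) ^ n)⁻¹| ≤
            K * Real.exp (-c * n) * ((Nat.card G : ℝ) ^ n)⁻¹ :=
  prob_FM_eq_zero_of_code_general ε δ hε hδ a ha G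

end
end

section
/- Let P be a finite set of primes and let G be a finite abelian group all of whose prime divisors lie in P. Write |G| = ∏_{p∈P} p^{k_p} and set a = ∏_{p∈P} p^{k_p + 1}. Then for every finite abelian group H, H_P ≅ G if and only if H ⊗ ℤ/aℤ ≅ G. -/
/-!
Write `n = ∏ p`, `b = |G|` and `a = ∏ p ^ (k p + 1) = b * n`. Since `n ∣ a ∣ n ^ s`, the group
`H_P` is the `a`-primary part of `H`, and Fitting's lemma for multiplication by `a` splits
`H = H_P ⊕ R` with `a R = R`; hence `H ⊗ ℤ/a ≅ H_P ⊗ ℤ/a ≅ H_P / a H_P`, a group of order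
`|H_P[a]|`. If `H_P ≅ G`, then `a` kills `H_P` because `b ∣ a`, so `H_P / a H_P = H_P`.
Conversely, if `H_P / a H_P ≅ G` then `|H_P[a]| = b`; an element of `H_P` whose order does not
divide `a` would give, for a prime `q ∣ n`, an element of `H_P[a]` of order `q ^ v_q(a)`, which
cannot divide `b` since `v_q(a) > v_q(b)`. So again `a` kills `H_P`.
-/

noncomputable section

/-- The `P`-part `H_P` of an abelian group `H`: the subgroup of elements killed by some
power of `∏_{p ∈ P} p`, i.e. the product of the `p`-primary components for `p ∈ P`. -/
def primesPart (P : Finset ℕ) (H : Type*) [AddCommGroup H] : AddSubgroup H where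
  carrier := {x | ∃ k : ℕ, (∏ p ∈ P, p) ^ k • x = 0}
  zero_mem' := ⟨0, by simp⟩
  add_mem' := by
    rintro x y ⟨k, hk⟩ ⟨l, hl⟩
    refine ⟨k + l, ?_⟩
    have hx : (∏ p ∈ P, p) ^ (k + l) • x = 0 := by
      rw [add_comm, pow_add, mul_smul, hk, smul_zero]
    have hy : (∏ p ∈ P, p) ^ (k + l) • y = 0 := by
      rw [pow_add, mul_smul, hl, smul_zero]
    rw [smul_add, hx, hy, add_zero]
  neg_mem' := by
    rintro x ⟨k, hk⟩
    exact ⟨k, by rw [smul_neg, hk, neg_zero]⟩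

lemma Nat.exists_prime_pow_succ_factorization_dvd {m c : ℕ} (hm : m ≠ 0) (hc : c ≠ 0)
    (h : ¬ m ∣ c) : ∃ q, q.Prime ∧ q ^ (c.factorization q + 1) ∣ m := by
  by_contra! H
  refine h ((Nat.factorization_prime_le_iff_dvd hm hc).mp fun q hq => ?_)
  by_contra! hlt
  exact H q hq ((hq.pow_dvd_iff_le_factorization hm).mpr hlt)

section

open Filter TensorProduct Pointwise

variable {M : Type*} [AddCommGroup M]

variable (M) in
def tensorZModEquivQuotSMulTop (c : ℕ) :
    M ⊗[ℤ] ZMod c ≃ₗ[ℤ] M ⧸ ((c : ℤ) • ⊤ : Submodule ℤ M) :=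
  TensorProduct.congr (LinearEquiv.refl ℤ M)
      (Int.quotientSpanNatEquivZMod c).symm.toAddEquiv.toIntLinearEquiv ≪≫ₗ
    tensorQuotEquivQuotSMul M _ ≪≫ₗ
    Submodule.quotEquivOfEq _ _ (Submodule.ideal_span_singleton_smul _ _)

lemma natCast_smul_top_toAddSubgroup (c : ℕ) :
    ((c : ℤ) • ⊤ : Submodule ℤ M).toAddSubgroup = (nsmulAddMonoidHom c).range := by
  ext x
  simp only [Submodule.mem_toAddSubgroup, Submodule.mem_smul_pointwise_iff_exists, natCast_zsmul,
    Submodule.mem_top, true_and, AddMonoidHom.mem_range, nsmulAddMonoidHom_apply]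

lemma natCard_tensor_zmod_eq_natCard_torsionBy [Finite M] (c : ℕ) :
    Nat.card (M ⊗[ℤ] ZMod c) = Nat.card (AddSubgroup.torsionBy M c) := by
  have hker : (nsmulAddMonoidHom c : M →+ M).ker = AddSubgroup.torsionBy M c := by
    ext x
    exact AddSubgroup.torsionBy.nsmul_iff.symm
  rw [Nat.card_congr (tensorZModEquivQuotSMulTop M c).toEquiv, ← hker,
    ← AddSubgroup.index_range, ← natCast_smul_top_toAddSubgroup]
  rfl

lemma nonempty_tensor_zmod_equiv_self {c : ℕ} (hc : ∀ x : M, c • x = 0) :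
    Nonempty (M ⊗[ℤ] ZMod c ≃+ M) := by
  have : ((c : ℤ) • ⊤ : Submodule ℤ M) = ⊥ := by
    simp [Submodule.eq_bot_iff, Submodule.mem_smul_pointwise_iff_exists, hc]
  exact ⟨(tensorZModEquivQuotSMulTop M c ≪≫ₗ Submodule.quotEquivOfEqBot _ this).toAddEquiv⟩

lemma subsingleton_tensor_zmod_of_surjective_nsmul {c : ℕ} (hc : ∀ x : M, ∃ y, c • y = x) :
    Subsingleton (M ⊗[ℤ] ZMod c) := by
  refine subsingleton_of_forall_eq 0 fun t => t.induction_on rfl (fun x z => ?_)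
    fun _ _ h₁ h₂ => by rw [h₁, h₂, add_zero]
  obtain ⟨y, rfl⟩ := hc x
  rw [← Nat.cast_smul_eq_nsmul ℤ, TensorProduct.smul_tmul, Nat.cast_smul_eq_nsmul, nsmul_eq_mul,
    ZMod.natCast_self, zero_mul, tmul_zero]

lemma exists_pow_nsmul_eq_zero_iff_of_dvd {n c s : ℕ} (hnc : n ∣ c) (hcn : c ∣ n ^ s) (x : M) :
    (∃ t, n ^ t • x = 0) ↔ ∃ t, c ^ t • x = 0 := by
  refine ⟨fun ⟨t, ht⟩ => ⟨t, ?_⟩, fun ⟨t, ht⟩ => ⟨s * t, ?_⟩⟩ <;>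
    refine addOrderOf_dvd_iff_nsmul_eq_zero.mp ((addOrderOf_dvd_of_nsmul_eq_zero ht).trans ?_)
  · exact pow_dvd_pow_of_dvd hnc t
  · exact pow_mul n s t ▸ pow_dvd_pow_of_dvd hcn t

lemma exists_isCompl_primary_divisible [Finite M] (c : ℕ) :
    ∃ K R : Submodule ℤ M, IsCompl K R ∧ (∀ x, x ∈ K ↔ ∃ t, c ^ t • x = 0) ∧
      ∀ x ∈ R, ∃ y ∈ R, c • y = x := by
  set f : Module.End ℤ M := (c : Module.End ℤ M)
  have hf (t : ℕ) (x : M) : (f ^ t) x = c ^ t • x := by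
    rw [← Nat.cast_pow, Module.End.natCast_apply]
  obtain ⟨N, hcompl, hker, hrange, hrange'⟩ := (f.eventually_isCompl_ker_pow_range_pow.and <|
    f.eventually_iSup_ker_pow_eq.and <| f.eventually_iInf_range_pow_eq.and
      ((tendsto_add_atTop_nat 1).eventually f.eventually_iInf_range_pow_eq)).exists
  refine ⟨_, _, hcompl, fun x => ⟨fun hx => ⟨N, by rwa [← hf]⟩, fun ⟨t, ht⟩ => ?_⟩, ?_⟩
  · rw [← hker]
    exact Submodule.mem_iSup_of_mem t (by rwa [LinearMap.mem_ker, hf])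
  · rintro _ ⟨y, rfl⟩
    obtain ⟨z, hz⟩ : (f ^ N) y ∈ LinearMap.range (f ^ (N + 1)) := by
      rw [← hrange', hrange]; exact LinearMap.mem_range_self _ _
    refine ⟨(f ^ N) z, LinearMap.mem_range_self _ _, ?_⟩
    rw [← hz, pow_succ', Module.End.mul_apply, ← pow_one c, ← hf, pow_one]

lemma nonempty_tensor_zmod_equiv_primary [Finite M] (c : ℕ) (K : AddSubgroup M)
    (hK : ∀ x, x ∈ K ↔ ∃ t, c ^ t • x = 0) : Nonempty (M ⊗[ℤ] ZMod c ≃+ K ⊗[ℤ] ZMod c) := by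
  obtain ⟨K', R, hcompl, hK', hR⟩ := exists_isCompl_primary_divisible (M := M) c
  obtain rfl : K = K'.toAddSubgroup := by ext x; rw [hK, Submodule.mem_toAddSubgroup, hK']
  have : Subsingleton (R ⊗[ℤ] ZMod c) :=
    subsingleton_tensor_zmod_of_surjective_nsmul fun x => by
      obtain ⟨y, hy, hyx⟩ := hR x x.2
      exact ⟨⟨y, hy⟩, Subtype.ext hyx⟩
  have : Unique (R ⊗[ℤ] ZMod c) := uniqueOfSubsingleton 0
  -- `↥K'.toAddSubgroup` and `↥K'` are definitionally the same `ℤ`-module.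
  exact ⟨(TensorProduct.congr (Submodule.prodEquivOfIsCompl K' R hcompl).symm
      (LinearEquiv.refl ℤ _) ≪≫ₗ TensorProduct.prodLeft ℤ ℤ _ _ _).toAddEquiv.trans
    AddEquiv.prodUnique⟩

lemma nsmul_eq_zero_of_natCard_torsionBy_dvd [Finite M] {n b : ℕ}
    (htors : ∀ x : M, ∃ t, n ^ t • x = 0)
    (hcard : Nat.card (AddSubgroup.torsionBy M ↑(b * n)) ∣ b) (x : M) : (b * n) • x = 0 := by
  rcases eq_or_ne (b * n) 0 with h0 | h0
  · rw [h0, zero_smul]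
  obtain ⟨hb, hn⟩ := mul_ne_zero_iff.mp h0
  rw [← addOrderOf_dvd_iff_nsmul_eq_zero]
  by_contra hx
  set m := addOrderOf x
  have hm : m ≠ 0 := (isOfFinAddOrder_of_finite x).addOrderOf_pos.ne'
  obtain ⟨q, hq, hqm⟩ := Nat.exists_prime_pow_succ_factorization_dvd hm h0 hx
  obtain ⟨t, ht⟩ := htors x
  have hqn : q ∣ n := hq.dvd_of_dvd_pow <|
    (dvd_pow_self q (Nat.succ_ne_zero _)).trans (hqm.trans (addOrderOf_dvd_of_nsmul_eq_zero ht))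
  set d := q ^ (b * n).factorization q
  have hdm : d ∣ m := (pow_dvd_pow q (Nat.le_succ _)).trans hqm
  have hy : (m / d) • x ∈ AddSubgroup.torsionBy M ↑(b * n) := by
    rw [AddSubgroup.torsionBy.nsmul_iff, ← addOrderOf_dvd_iff_nsmul_eq_zero,
      addOrderOf_nsmul_addOrderOf_sub hm hdm]
    exact Nat.ordProj_dvd _ _
  have hdb : q ^ (b.factorization q + 1) ∣ b := calc
    q ^ (b.factorization q + 1) ∣ d := by
      refine pow_dvd_pow q ?_
      rw [Nat.factorization_mul hb hn, Finsupp.add_apply]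
      exact Nat.add_le_add_left (hq.factorization_pos_of_dvd hn hqn) _
    _ = addOrderOf (⟨_, hy⟩ : AddSubgroup.torsionBy M ↑(b * n)) := by
      rw [AddSubgroup.addOrderOf_mk, addOrderOf_nsmul_addOrderOf_sub hm hdm]
    _ ∣ Nat.card (AddSubgroup.torsionBy M ↑(b * n)) := addOrderOf_dvd_natCard _
    _ ∣ b := hcard
  exact Nat.pow_succ_factorization_not_dvd hb hq hdb

end

theorem primesPart_iso_iff_tensor_iso_general
    (P : Finset ℕ)
    (G : Type*) [AddCommGroup G] [Finite G]
    (k : ℕ → ℕ) (hcard : Nat.card G = ∏ p ∈ P, p ^ k p)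
    (H : Type*) [AddCommGroup H] [Finite H] :
    Nonempty ((primesPart P H) ≃+ G) ↔
      Nonempty ((TensorProduct ℤ H (ZMod (∏ p ∈ P, p ^ (k p + 1)))) ≃+ G) := by
  set n := ∏ p ∈ P, p
  set b := ∏ p ∈ P, p ^ k p
  have ha : ∏ p ∈ P, p ^ (k p + 1) = b * n := by
    simp_rw [pow_succ]
    exact Finset.prod_mul_distrib
  have hbn : b ∣ n ^ ∑ p ∈ P, k p := by
    rw [← Finset.prod_pow]
    exact Finset.prod_dvd_prod_of_dvd _ _ fun p hp =>
      pow_dvd_pow p (Finset.single_le_sum (fun _ _ => Nat.zero_le _) hp)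
  rw [ha]
  set A := primesPart P H
  have htors (x : A) : ∃ t, n ^ t • x = 0 := by
    obtain ⟨t, ht⟩ := x.2
    exact ⟨t, Subtype.ext ht⟩
  obtain ⟨eH⟩ := nonempty_tensor_zmod_equiv_primary (b * n) A fun x =>
    exists_pow_nsmul_eq_zero_iff_of_dvd (dvd_mul_left n b)
      (pow_succ n _ ▸ mul_dvd_mul_right hbn n) x
  constructor
  · rintro ⟨e⟩
    have hcardA : Nat.card A = b := (Nat.card_congr e.toEquiv).trans hcard
    obtain ⟨e'⟩ := nonempty_tensor_zmod_equiv_self (c := b * n) fun x : A =>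
      addOrderOf_dvd_iff_nsmul_eq_zero.mp <|
        (addOrderOf_dvd_natCard x).trans (hcardA ▸ dvd_mul_right b n)
    exact ⟨eH.trans (e'.trans e)⟩
  · rintro ⟨e⟩
    have hcardA : Nat.card (AddSubgroup.torsionBy A ↑(b * n)) = b := by
      rw [← natCard_tensor_zmod_eq_natCard_torsionBy, Nat.card_congr (eH.symm.trans e).toEquiv,
        hcard]
    obtain ⟨e'⟩ := nonempty_tensor_zmod_equiv_self
      (nsmul_eq_zero_of_natCard_torsionBy_dvd htors hcardA.dvd)
    exact ⟨e'.symm.trans (eH.symm.trans e)⟩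

/-- Let `P` be a finite set of primes, `G` a finite abelian group all of whose prime
divisors lie in `P`, `|G| = ∏_{p ∈ P} p^{k_p}`, and `a = ∏_{p ∈ P} p^{k_p + 1}`. Then for
every finite abelian group `H`, `H_P ≅ G` if and only if `H ⊗ ℤ/aℤ ≅ G`. -/
theorem primesPart_iso_iff_tensor_iso
    (P : Finset ℕ) (hP : ∀ p ∈ P, p.Prime)
    (G : Type*) [AddCommGroup G] [Finite G]
    (hG : ∀ q : ℕ, q.Prime → q ∣ Nat.card G → q ∈ P)
    (k : ℕ → ℕ) (hcard : Nat.card G = ∏ p ∈ P, p ^ k p)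
    (H : Type*) [AddCommGroup H] [Finite H] :
    Nonempty ((primesPart P H) ≃+ G) ↔
      Nonempty ((TensorProduct ℤ H (ZMod (∏ p ∈ P, p ^ (k p + 1)))) ≃+ G) :=
  primesPart_iso_iff_tensor_iso_general P G k hcard H

end
end
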